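/- For every nonnegative integer r, there exists a polynomial P_r with integer coefficients, of degree r, such that for all positive integers n, Σ_{k=0}^{2n} C(2n,k)·|n−k|^{2r+1} = P_r(n)·n·C(2n,n). -/

import Mathlib

/-!
Write `S_r(n) = ∑ₖ C(2n,k) |n-k|^(2r+1)`. Since `(n-k)² = n² - k(2n-k)` and
`k(2n-k) C(2n,k) = 2n(2n-1) C(2n-2,k-1)`, we get `S_{r+1}(n) = n² S_r(n) - 2n(2n-1) S_r(n-1)`,
and `2n(2n-1) C(2n-2,n-1) = n² C(2n,n)` turns this into the recursion
`P_{r+1}(x) = x (x P_r(x) - (x-1) P_r(x-1))`, starting from `S_0(n) = n C(2n,n)`, i.e. `P_0 = 1`.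
The bracket is a backward difference of `x P_r(x)`, so each step raises the degree by exactly one.
-/

open Finset Polynomial

namespace Polynomial

variable {R : Type*} [CommRing R]

theorem coeff_taylor_of_natDegree_le {p : R[X]} {d : ℕ} (hp : p.natDegree ≤ d + 1) (a : R) :
    (taylor a p).coeff d = p.coeff d + (d + 1) * p.coeff (d + 1) * a := by
  have h : (hasseDeriv d p).natDegree < 2 := (natDegree_hasseDeriv_le p d).trans_lt (by omega)
  rw [taylor_coeff, eval_eq_sum_range' h]
  simp [sum_range_succ, hasseDeriv_coeff, add_comm 1 d]

theorem degree_sub_comp_X_add_C [IsDomain R] [CharZero R] {p : R[X]} {a : R} (ha : a ≠ 0)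
    {d : ℕ} (hp : p.natDegree = d + 1) : (p - p.comp (X + C a)).degree = d := by
  rw [← taylor_apply]
  refine degree_eq_of_le_of_coeff_ne_zero ?_ ?_
  · refine degree_le_of_natDegree_le (natDegree_le_iff_coeff_eq_zero.2 fun N hN => ?_)
    obtain rfl | hN : N = d + 1 ∨ d + 1 < N := by omega
    · rw [coeff_sub, ← hp, coeff_taylor_natDegree, leadingCoeff, sub_self]
    · rw [coeff_sub, coeff_eq_zero_of_natDegree_lt (hp ▸ hN),
        coeff_eq_zero_of_natDegree_lt ((natDegree_taylor p a).trans hp ▸ hN), sub_zero]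
  · have hlead : p.coeff (d + 1) ≠ 0 := by
      rw [← hp, coeff_natDegree, leadingCoeff_ne_zero]
      rintro rfl
      simp at hp
    rw [coeff_sub, coeff_taylor_of_natDegree_le hp.le]
    simpa [ha, hlead] using Nat.cast_add_one_ne_zero (R := R) d

end Polynomial

theorem Finset.sum_range_two_mul_add_one_of_symm {M : Type*} [AddCommMonoid M] (n : ℕ)
    (g : ℕ → M) (hg : ∀ k ≤ 2 * n, g (2 * n - k) = g k) :
    ∑ k ∈ range (2 * n + 1), g k = 2 • ∑ k ∈ range n, g k + g n := by
  have hreflect : ∑ j ∈ range n, g (n + 1 + j) = ∑ j ∈ range n, g j := by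
    rw [← sum_range_reflect]
    refine sum_congr rfl fun j hj => ?_
    rw [mem_range] at hj
    rw [← hg j (by omega)]
    congr 1
    omega
  rw [show 2 * n + 1 = (n + 1) + n by ring, sum_range_add, hreflect, sum_range_succ]
  abel

namespace Nat

theorem sum_range_choose_mul_sub_two_mul (N m : ℕ) :
    ∑ k ∈ range (m + 1), ((N + 1).choose k : ℤ) * (N + 1 - 2 * k) = (N + 1) * N.choose m := by
  induction m with
  | zero => simp
  | succ m ih =>
    have hpascal : ((N + 1).choose (m + 1) : ℤ) = N.choose m + N.choose (m + 1) := by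
      exact_mod_cast choose_succ_succ N m
    have habsorb : ((N + 1 : ℕ) : ℤ) * N.choose m = (N + 1).choose (m + 1) * (m + 1) := by
      exact_mod_cast add_one_mul_choose_eq N m
    rw [sum_range_succ, ih]
    push_cast at habsorb ⊢
    linear_combination (N + 1 : ℤ) * hpascal + 2 * habsorb

theorem sum_range_mul_mul_choose {R : Type*} [CommRing R] (N : ℕ) (g : ℕ → R) :
    ∑ k ∈ range (N + 3), (k * (N + 2 - k) * (N + 2).choose k : R) * g k =
      (N + 2) * (N + 1) * ∑ k ∈ range (N + 1), (N.choose k : R) * g (k + 1) := by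
  rw [sum_range_succ, sum_range_succ', mul_sum]
  push_cast
  simp only [sub_self, mul_zero, zero_mul, add_zero]
  refine sum_congr rfl fun k hk => ?_
  have hk : k ≤ N := by rw [mem_range] at hk; omega
  have hterm : (k + 1) * (N + 1 - k) * (N + 2).choose (k + 1) =
      (N + 2) * (N + 1) * N.choose k :=
    calc (k + 1) * (N + 1 - k) * (N + 2).choose (k + 1)
        = (N + 1 - k) * ((N + 2).choose (k + 1) * (k + 1)) := by ring
      _ = (N + 2) * ((N + 1).choose k * (N + 1 - k)) := by rw [← add_one_mul_choose_eq]; ring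
      _ = (N + 2) * (N + 1) * N.choose k := by rw [← choose_mul_succ_eq]; ring
  have hcast := congrArg (Nat.cast (R := R)) hterm
  rw [Nat.cast_mul, Nat.cast_mul, Nat.cast_sub (by omega : k ≤ N + 1)] at hcast
  push_cast at hcast
  linear_combination g (k + 1) * hcast

end Nat

def centralAbsMoment (r n : ℕ) : ℤ :=
  ∑ k ∈ range (2 * n + 1), ((2 * n).choose k : ℤ) * |(n : ℤ) - k| ^ (2 * r + 1)

theorem centralAbsMoment_zero_left (n : ℕ) : centralAbsMoment 0 n = n * (2 * n).choose n := by
  rcases n with _ | m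
  · simp [centralAbsMoment]
  have hsymm : ∀ k ≤ 2 * (m + 1), ((2 * (m + 1)).choose (2 * (m + 1) - k) : ℤ) *
      |((m + 1 : ℕ) : ℤ) - (2 * (m + 1) - k : ℕ)| ^ (2 * 0 + 1) =
      ((2 * (m + 1)).choose k : ℤ) * |((m + 1 : ℕ) : ℤ) - k| ^ (2 * 0 + 1) := by
    intro k hk
    rw [Nat.choose_symm hk, Nat.cast_sub hk, ← abs_neg]
    congr 3
    push_cast
    ring
  have hhalf : 2 * ∑ k ∈ range (m + 1),
      ((2 * (m + 1)).choose k : ℤ) * |((m + 1 : ℕ) : ℤ) - k| ^ (2 * 0 + 1) =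
      (2 * m + 2) * (2 * m + 1).choose m := by
    have := Nat.sum_range_choose_mul_sub_two_mul (2 * m + 1) m
    push_cast at this
    rw [show (2 * m + 2 : ℤ) = 2 * m + 1 + 1 by ring, ← this, mul_sum]
    refine sum_congr rfl fun k hk => ?_
    rw [mem_range] at hk
    rw [pow_one, abs_of_nonneg (by omega), show 2 * (m + 1) = 2 * m + 1 + 1 by ring]
    push_cast
    ring
  have habsorb : ((2 * m + 1 + 1 : ℕ) : ℤ) * (2 * m + 1).choose m =
      (2 * m + 1 + 1).choose (m + 1) * (m + 1) := by
    exact_mod_cast Nat.add_one_mul_choose_eq (2 * m + 1) m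
  rw [centralAbsMoment, sum_range_two_mul_add_one_of_symm _ _ hsymm, two_nsmul, ← two_mul, hhalf]
  push_cast at habsorb ⊢
  simp only [sub_self, abs_zero]
  linear_combination habsorb

theorem centralAbsMoment_succ_succ (r m : ℕ) :
    centralAbsMoment (r + 1) (m + 1) =
      (m + 1) ^ 2 * centralAbsMoment r (m + 1) -
        (2 * m + 2) * (2 * m + 1) * centralAbsMoment r m := by
  have hshift := Nat.sum_range_mul_mul_choose (2 * m) fun k => |(m + 1 : ℤ) - k| ^ (2 * r + 1)
  push_cast at hshift
  simp only [centralAbsMoment]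
  push_cast
  simp only [add_sub_add_right_eq_sub] at hshift
  rw [show 2 * (m + 1) = 2 * m + 2 by ring, ← hshift, mul_sum, ← sum_sub_distrib]
  refine sum_congr rfl fun k _ => ?_
  rw [show 2 * (r + 1) + 1 = 2 * r + 1 + 2 by ring, pow_add, sq_abs]
  ring

noncomputable def absMomentPoly : ℕ → ℤ[X]
  | 0 => 1
  | r + 1 => X * (X * absMomentPoly r - (X - 1) * (absMomentPoly r).comp (X - 1))

theorem degree_absMomentPoly (r : ℕ) : (absMomentPoly r).degree = r := by
  induction r with
  | zero => simp [absMomentPoly]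
  | succ r ih =>
    have hne : absMomentPoly r ≠ 0 := by rintro h; simp [h] at ih
    have hq : (X * absMomentPoly r).natDegree = r + 1 := by
      rw [natDegree_X_mul hne, natDegree_eq_of_degree_eq_some ih, add_comm]
    have hdiff := degree_sub_comp_X_add_C (a := -1) (by norm_num) hq
    rw [mul_comp, X_comp, C_neg, C_1, ← sub_eq_add_neg] at hdiff
    rw [absMomentPoly, degree_mul, degree_X, hdiff]
    norm_cast
    omega

theorem centralAbsMoment_eq (r n : ℕ) :
    centralAbsMoment r n = (absMomentPoly r).eval (n : ℤ) * n * (2 * n).choose n := by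
  induction r generalizing n with
  | zero => simp [centralAbsMoment_zero_left, absMomentPoly]
  | succ r ih =>
    rcases n with _ | m
    · simp [centralAbsMoment]
    have hcentral : ((m + 1 : ℕ) : ℤ) * (2 * (m + 1)).choose (m + 1) =
        2 * (2 * m + 1) * (2 * m).choose m := by
      exact_mod_cast Nat.succ_mul_centralBinom_succ m
    rw [centralAbsMoment_succ_succ, ih, ih, absMomentPoly]
    simp only [eval_mul, eval_sub, eval_X, eval_comp, eval_one]
    push_cast at hcentral ⊢
    rw [add_sub_cancel_right]
    linear_combination (m * (absMomentPoly r).eval (m : ℤ) * (m + 1)) * hcentral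

theorem stmt_11 (r : ℕ) :
    ∃ P : Polynomial ℤ, P.degree = r ∧
      ∀ n : ℕ, 0 < n →
        ∑ k ∈ Finset.range (2 * n + 1),
            (Nat.choose (2 * n) k : ℤ) * |(n : ℤ) - k| ^ (2 * r + 1) =
          P.eval (n : ℤ) * n * Nat.choose (2 * n) n :=
  ⟨absMomentPoly r, degree_absMomentPoly r, fun n _ => centralAbsMoment_eq r n⟩
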